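/- If the support of an optimal coupling γ̃ for K_d(μ, ν) is a disconnected graph with connected components having vertex sets X₁, …, X_k, then μ(X_i) = ν(X_i) for every i, and γ̃ restricted to X_i × X_i, normalized by μ(X_i), is an optimal coupling of the conditional distributions μ|_{X_i} and ν|_{X_i}. -/

import Mathlib

def IsCoupling {X : Type*} [Fintype X] (μ ν : X → ℝ) (γ : X → X → ℝ) : Prop :=
  (∀ x y, 0 ≤ γ x y) ∧ (∀ x, ∑ y, γ x y = μ x) ∧ (∀ y, ∑ x, γ x y = ν y)

noncomputable def Kd {X : Type*} [Fintype X] (d : X → X → ℝ) (μ ν : X → ℝ) : ℝ :=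
  sInf {r | ∃ γ, IsCoupling μ ν γ ∧ r = ∑ x, ∑ y, d x y * γ x y}

/-!
Let `S` be a union of components of the support of an optimal coupling `γ`. No mass of `γ`
crosses the boundary of `S`, so the row and column sums of the block `γ|S×S` are `μ` and `ν`
on `S`; this gives `μ(S) = ν(S)` and makes `γ|S×S / c` a coupling of the conditional
marginals. If `g` is any coupling of these, replacing the block `γ|S×S` by `c • g` gives again
a coupling of `μ` and `ν`, whose cost differs from that of `γ` by `c` times the difference of
the costs of `g` and `γ|S×S / c`. Optimality of `γ` thus forces optimality of its block.
-/

open Finset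

section

variable {X : Type*}

/-- `S` is a union of connected components of the support graph of `γ`. -/
def SupportClosed (γ : X → X → ℝ) (S : Finset X) : Prop :=
  ∀ x y, 0 < γ x y → (x ∈ S ↔ y ∈ S)

theorem supportClosed_of_partition {ι : Type*} {P : ι → Finset X} {γ : X → X → ℝ}
    (hcover : ∀ x : X, ∃! i, x ∈ P i)
    (hsupp : ∀ x y, 0 < γ x y → ∃ i, x ∈ P i ∧ y ∈ P i) (i : ι) :
    SupportClosed γ (P i) := by
  intro x y hxy
  obtain ⟨j, hxj, hyj⟩ := hsupp x y hxy
  constructor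
  · intro hxi
    rwa [(hcover x).unique hxi hxj]
  · intro hyi
    rwa [(hcover y).unique hyi hyj]

variable [Fintype X]

def transportCost (d γ : X → X → ℝ) : ℝ := ∑ x, ∑ y, d x y * γ x y

namespace IsCoupling

variable {μ ν : X → ℝ} {γ : X → X → ℝ}

theorem le_left (hγ : IsCoupling μ ν γ) (x y : X) : γ x y ≤ μ x := by
  rw [← hγ.2.1 x]
  exact single_le_sum (fun y _ => hγ.1 x y) (mem_univ y)

theorem eq_zero_of_left_eq_zero (hγ : IsCoupling μ ν γ) {x : X} (hx : μ x = 0) (y : X) :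
    γ x y = 0 :=
  le_antisymm (hx ▸ hγ.le_left x y) (hγ.1 x y)

theorem eq_zero_of_right_eq_zero (hγ : IsCoupling μ ν γ) (x : X) {y : X} (hy : ν y = 0) :
    γ x y = 0 := by
  refine le_antisymm ?_ (hγ.1 x y)
  rw [← hy, ← hγ.2.2 y]
  exact single_le_sum (fun x _ => hγ.1 x y) (mem_univ x)

end IsCoupling

section Kd

variable (d : X → X → ℝ) (μ ν : X → ℝ)

/-- Couplings have entries bounded by the marginals, so costs are bounded below even when `d`
takes negative values. -/
theorem bddBelow_transportCost :
    BddBelow {r | ∃ γ, IsCoupling μ ν γ ∧ r = ∑ x, ∑ y, d x y * γ x y} := by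
  refine ⟨-∑ x, ∑ y, |d x y| * μ x, ?_⟩
  rintro _ ⟨γ, hγ, rfl⟩
  simp only [← sum_neg_distrib]
  gcongr with x _ y _
  calc -(|d x y| * μ x) ≤ -(|d x y| * γ x y) := by gcongr; exact hγ.le_left x y
    _ ≤ d x y * γ x y := by rw [← neg_mul]; gcongr; exacts [hγ.1 x y, neg_abs_le _]

variable {d μ ν}

theorem Kd_le_transportCost {γ : X → X → ℝ} (hγ : IsCoupling μ ν γ) :
    Kd d μ ν ≤ transportCost d γ :=
  csInf_le (bddBelow_transportCost d μ ν) ⟨γ, hγ, rfl⟩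

theorem transportCost_eq_Kd_of_forall_le {γ : X → X → ℝ} (hγ : IsCoupling μ ν γ)
    (hmin : ∀ g, IsCoupling μ ν g → transportCost d γ ≤ transportCost d g) :
    transportCost d γ = Kd d μ ν :=
  le_antisymm (le_csInf ⟨_, γ, hγ, rfl⟩ fun _ ⟨g, hg, hr⟩ => hr ▸ hmin g hg)
    (Kd_le_transportCost hγ)

end Kd

namespace SupportClosed

variable {μ ν : X → ℝ} {γ : X → X → ℝ} {S : Finset X}

theorem eq_zero_of_mem_left (hS : SupportClosed γ S) (hγ : IsCoupling μ ν γ) {x y : X}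
    (hx : x ∈ S) (hy : y ∉ S) : γ x y = 0 :=
  (hγ.1 x y).eq_of_not_lt' fun h => hy ((hS x y h).1 hx)

theorem eq_zero_of_mem_right (hS : SupportClosed γ S) (hγ : IsCoupling μ ν γ) {x y : X}
    (hx : x ∉ S) (hy : y ∈ S) : γ x y = 0 :=
  (hγ.1 x y).eq_of_not_lt' fun h => hx ((hS x y h).2 hy)

theorem sum_row (hS : SupportClosed γ S) (hγ : IsCoupling μ ν γ) {x : X} (hx : x ∈ S) :
    ∑ y ∈ S, γ x y = μ x := by
  rw [← hγ.2.1 x]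
  exact sum_subset (subset_univ S) fun y _ hy => hS.eq_zero_of_mem_left hγ hx hy

theorem sum_col (hS : SupportClosed γ S) (hγ : IsCoupling μ ν γ) {y : X} (hy : y ∈ S) :
    ∑ x ∈ S, γ x y = ν y := by
  rw [← hγ.2.2 y]
  exact sum_subset (subset_univ S) fun x _ hx => hS.eq_zero_of_mem_right hγ hx hy

theorem sum_left_eq_sum_right (hS : SupportClosed γ S) (hγ : IsCoupling μ ν γ) :
    ∑ x ∈ S, μ x = ∑ x ∈ S, ν x := by
  calc ∑ x ∈ S, μ x = ∑ x ∈ S, ∑ y ∈ S, γ x y :=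
        sum_congr rfl fun x hx => (hS.sum_row hγ hx).symm
    _ = ∑ y ∈ S, ∑ x ∈ S, γ x y := sum_comm
    _ = ∑ y ∈ S, ν y := sum_congr rfl fun y hy => hS.sum_col hγ hy

end SupportClosed

variable [DecidableEq X]

noncomputable def condMarginal (S : Finset X) (c : ℝ) (μ : X → ℝ) : X → ℝ :=
  fun x => if x ∈ S then μ x / c else 0

noncomputable def condCoupling (S : Finset X) (c : ℝ) (γ : X → X → ℝ) : X → X → ℝ :=
  fun x y => if x ∈ S ∧ y ∈ S then γ x y / c else 0

def replaceBlock (S : Finset X) (g γ : X → X → ℝ) : X → X → ℝ :=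
  fun x y => if x ∈ S ∧ y ∈ S then g x y else γ x y

theorem IsCoupling.eq_zero_of_notMem_block {S : Finset X} {c : ℝ} {μ ν : X → ℝ}
    {g : X → X → ℝ} (hg : IsCoupling (condMarginal S c μ) (condMarginal S c ν) g) {x y : X}
    (h : ¬(x ∈ S ∧ y ∈ S)) : g x y = 0 := by
  rw [not_and_or] at h
  rcases h with hx | hy
  · exact hg.eq_zero_of_left_eq_zero (if_neg hx) y
  · exact hg.eq_zero_of_right_eq_zero x (if_neg hy)

theorem transportCost_eq_block_add (d f : X → X → ℝ) (S : Finset X) :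
    transportCost d f = ∑ x ∈ S, ∑ y ∈ S, d x y * f x y +
      ∑ x, ∑ y, if x ∈ S ∧ y ∈ S then 0 else d x y * f x y := by
  have hblock : ∑ x ∈ S, ∑ y ∈ S, d x y * f x y =
      ∑ x, ∑ y, if x ∈ S ∧ y ∈ S then d x y * f x y else 0 := by
    simp only [ite_and, sum_ite_irrel, sum_ite_mem, univ_inter, sum_const_zero]
  rw [hblock, transportCost, ← sum_add_distrib]
  refine sum_congr rfl fun x _ => ?_
  rw [← sum_add_distrib]
  refine sum_congr rfl fun y _ => ?_
  split_ifs <;> simp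

theorem transportCost_eq_block (d : X → X → ℝ) {f : X → X → ℝ} {S : Finset X}
    (hf : ∀ x y, ¬(x ∈ S ∧ y ∈ S) → f x y = 0) :
    transportCost d f = ∑ x ∈ S, ∑ y ∈ S, d x y * f x y := by
  rw [transportCost_eq_block_add d f S, add_eq_left]
  refine sum_eq_zero fun x _ => sum_eq_zero fun y _ => ?_
  split_ifs with h
  exacts [rfl, by rw [hf x y h, mul_zero]]

theorem transportCost_replaceBlock (d : X → X → ℝ) (S : Finset X) (g γ : X → X → ℝ) :
    transportCost d (replaceBlock S g γ) + ∑ x ∈ S, ∑ y ∈ S, d x y * γ x y =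
      transportCost d γ + ∑ x ∈ S, ∑ y ∈ S, d x y * g x y := by
  rw [transportCost_eq_block_add d _ S, transportCost_eq_block_add d γ S]
  have hin : ∑ x ∈ S, ∑ y ∈ S, d x y * replaceBlock S g γ x y =
      ∑ x ∈ S, ∑ y ∈ S, d x y * g x y :=
    sum_congr rfl fun x hx => sum_congr rfl fun y hy => by simp [replaceBlock, hx, hy]
  have hout : (∑ x, ∑ y, if x ∈ S ∧ y ∈ S then 0 else d x y * replaceBlock S g γ x y) =
      ∑ x, ∑ y, if x ∈ S ∧ y ∈ S then 0 else d x y * γ x y :=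
    sum_congr rfl fun x _ => sum_congr rfl fun y _ => by
      unfold replaceBlock; split_ifs <;> rfl
  rw [hin, hout]
  ring

namespace SupportClosed

variable {d : X → X → ℝ} {μ ν : X → ℝ} {γ : X → X → ℝ} {S : Finset X} {c : ℝ}

theorem isCoupling_condCoupling (hS : SupportClosed γ S) (hγ : IsCoupling μ ν γ)
    (hc : 0 ≤ c) :
    IsCoupling (condMarginal S c μ) (condMarginal S c ν) (condCoupling S c γ) := by
  refine ⟨fun x y => ?_, fun x => ?_, fun y => ?_⟩
  · unfold condCoupling
    split_ifs
    exacts [div_nonneg (hγ.1 x y) hc, le_rfl]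
  · by_cases hx : x ∈ S
    · simp [condCoupling, condMarginal, hx, ← sum_div, hS.sum_row hγ hx]
    · simp [condCoupling, condMarginal, hx]
  · by_cases hy : y ∈ S
    · simp [condCoupling, condMarginal, hy, ← sum_div, hS.sum_col hγ hy]
    · simp [condCoupling, condMarginal, hy]

theorem isCoupling_replaceBlock (hS : SupportClosed γ S) (hγ : IsCoupling μ ν γ) (hc : 0 < c)
    {g : X → X → ℝ} (hg : IsCoupling (condMarginal S c μ) (condMarginal S c ν) g) :
    IsCoupling μ ν (replaceBlock S (c • g) γ) := by
  have hrow {x y : X} (hx : x ∈ S) : replaceBlock S (c • g) γ x y = c * g x y := by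
    by_cases hy : y ∈ S
    · simp [replaceBlock, hx, hy]
    · rw [replaceBlock, if_neg (by tauto), hS.eq_zero_of_mem_left hγ hx hy,
        hg.eq_zero_of_notMem_block (by tauto), mul_zero]
  have hcol {x y : X} (hy : y ∈ S) : replaceBlock S (c • g) γ x y = c * g x y := by
    by_cases hx : x ∈ S
    · simp [replaceBlock, hx, hy]
    · rw [replaceBlock, if_neg (by tauto), hS.eq_zero_of_mem_right hγ hx hy,
        hg.eq_zero_of_notMem_block (by tauto), mul_zero]
  refine ⟨fun x y => ?_, fun x => ?_, fun y => ?_⟩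
  · unfold replaceBlock
    split_ifs
    exacts [mul_nonneg hc.le (hg.1 x y), hγ.1 x y]
  · by_cases hx : x ∈ S
    · simp only [hrow hx, ← mul_sum, hg.2.1 x, condMarginal, if_pos hx]
      field_simp
    · simp only [replaceBlock, hx, false_and, if_false, hγ.2.1 x]
  · by_cases hy : y ∈ S
    · simp only [hcol hy, ← mul_sum, hg.2.2 y, condMarginal, if_pos hy]
      field_simp
    · simp only [replaceBlock, hy, and_false, if_false, hγ.2.2 y]

theorem transportCost_condCoupling_eq_Kd (hS : SupportClosed γ S) (hγ : IsCoupling μ ν γ)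
    (hopt : transportCost d γ = Kd d μ ν) (hc : 0 < c) :
    transportCost d (condCoupling S c γ) = Kd d (condMarginal S c μ) (condMarginal S c ν) := by
  refine transportCost_eq_Kd_of_forall_le (hS.isCoupling_condCoupling hγ hc.le) fun g hg => ?_
  have hγblock :
      ∑ x ∈ S, ∑ y ∈ S, d x y * γ x y = c * transportCost d (condCoupling S c γ) := by
    rw [transportCost_eq_block d (f := condCoupling S c γ) fun x y h => if_neg h, mul_sum]
    refine sum_congr rfl fun x hx => ?_
    rw [mul_sum]
    refine sum_congr rfl fun y hy => ?_
    rw [condCoupling, if_pos ⟨hx, hy⟩]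
    field_simp
  have hgblock : ∑ x ∈ S, ∑ y ∈ S, d x y * (c • g) x y = c * transportCost d g := by
    rw [transportCost_eq_block d fun x y h => hg.eq_zero_of_notMem_block h, mul_sum]
    simp only [mul_sum, Pi.smul_apply, smul_eq_mul]
    exact sum_congr rfl fun x _ => sum_congr rfl fun y _ => by ring
  have hswap := transportCost_replaceBlock d S (c • g) γ
  have hle := hopt ▸ Kd_le_transportCost (hS.isCoupling_replaceBlock hγ hc hg)
  rw [hγblock, hgblock] at hswap
  exact le_of_mul_le_mul_left (by linarith) hc

end SupportClosed

end

theorem optimal_coupling_disconnected_support_general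
    {X : Type*} [Fintype X] [DecidableEq X] (d : X → X → ℝ)
    (μ ν : X → ℝ)
    (γ : X → X → ℝ) (hγ : IsCoupling μ ν γ)
    (hγopt : ∑ x, ∑ y, d x y * γ x y = Kd d μ ν)
    (k : ℕ) (P : Fin k → Finset X)
    (hcover : ∀ x : X, ∃! i, x ∈ P i)
    (hsupp : ∀ x y, 0 < γ x y → ∃ i, x ∈ P i ∧ y ∈ P i) :
    (∀ i, ∑ x ∈ P i, μ x = ∑ x ∈ P i, ν x) ∧
    (∀ i, 0 < ∑ x ∈ P i, μ x →
      IsCoupling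
        (fun x => if x ∈ P i then μ x / (∑ z ∈ P i, μ z) else 0)
        (fun y => if y ∈ P i then ν y / (∑ z ∈ P i, μ z) else 0)
        (fun x y => if x ∈ P i ∧ y ∈ P i then γ x y / (∑ z ∈ P i, μ z) else 0) ∧
      (∑ x, ∑ y, d x y *
          (if x ∈ P i ∧ y ∈ P i then γ x y / (∑ z ∈ P i, μ z) else 0)) =
        Kd d (fun x => if x ∈ P i then μ x / (∑ z ∈ P i, μ z) else 0)
             (fun y => if y ∈ P i then ν y / (∑ z ∈ P i, μ z) else 0)) := by
  have hblock := supportClosed_of_partition hcover hsupp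
  exact ⟨fun i => (hblock i).sum_left_eq_sum_right hγ, fun i hm =>
    ⟨(hblock i).isCoupling_condCoupling hγ hm.le,
      (hblock i).transportCost_condCoupling_eq_Kd hγ hγopt hm⟩⟩

/-- If the support of an optimal coupling `γ̃` splits into components with vertex
sets `X₁, …, X_k` (a partition of `X` such that every edge of the support lies
inside a single block), then `μ(X_i) = ν(X_i)` for every `i`, and `γ̃` restricted
to `X_i × X_i` and normalized by `μ(X_i)` is an optimal coupling of the
conditional distributions `μ|_{X_i}` and `ν|_{X_i}`. -/
theorem optimal_coupling_disconnected_support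
    {X : Type*} [Fintype X] [DecidableEq X] (d : X → X → ℝ)
    (hd_eq : ∀ x y, d x y = 0 ↔ x = y)
    (hd_symm : ∀ x y, d x y = d y x)
    (hd_tri : ∀ x y z, d x z ≤ d x y + d y z)
    (μ ν : X → ℝ)
    (hμ0 : ∀ x, 0 ≤ μ x) (hμ1 : ∑ x, μ x = 1)
    (hν0 : ∀ x, 0 ≤ ν x) (hν1 : ∑ x, ν x = 1)
    (γ : X → X → ℝ) (hγ : IsCoupling μ ν γ)
    (hγopt : ∑ x, ∑ y, d x y * γ x y = Kd d μ ν)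
    (k : ℕ) (P : Fin k → Finset X)
    (hcover : ∀ x : X, ∃! i, x ∈ P i)
    (hsupp : ∀ x y, 0 < γ x y → ∃ i, x ∈ P i ∧ y ∈ P i) :
    (∀ i, ∑ x ∈ P i, μ x = ∑ x ∈ P i, ν x) ∧
    (∀ i, 0 < ∑ x ∈ P i, μ x →
      IsCoupling
        (fun x => if x ∈ P i then μ x / (∑ z ∈ P i, μ z) else 0)
        (fun y => if y ∈ P i then ν y / (∑ z ∈ P i, μ z) else 0)
        (fun x y => if x ∈ P i ∧ y ∈ P i then γ x y / (∑ z ∈ P i, μ z) else 0) ∧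
      (∑ x, ∑ y, d x y *
          (if x ∈ P i ∧ y ∈ P i then γ x y / (∑ z ∈ P i, μ z) else 0)) =
        Kd d (fun x => if x ∈ P i then μ x / (∑ z ∈ P i, μ z) else 0)
             (fun y => if y ∈ P i then ν y / (∑ z ∈ P i, μ z) else 0)) :=
  optimal_coupling_disconnected_support_general d μ ν γ hγ hγopt k P hcover hsupp
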